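/- Let X be an integer-valued random variable taking values in a lattice of step h (a positive integer), with variance σ² > 0, finite third absolute moment γ = E|X|³ > 0, H_h(X) > 0, and characteristic function φ(t) = E[e^{itX}]. Then for every positive integer n, ∫_{σ²/(4γ)}^{π/h} |φ(t)|ⁿ dt ≤ π^{5/2} γ / ( h² σ² n H_h(X) ). -/

import Mathlib

/-!
With `X* = X - X'` one has `|φ(t)|² = E cos(t X*)`, and `cos (2πu) ≤ 1 - 8⟨u⟩²` (the quadratic
bound for `cos` on `[-π, π]`), so `|φ(t)|² ≤ 1 - 8 H(X, t / 2π)`. Since `⟨2u⟩ ≤ 2⟨u⟩`,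
`H(X, 2d) ≤ 4 H(X, d)`; doubling `d` into `[1/(4h), 1/(2h)]` gives `H(X, d) ≥ 4h²d² H_h(X)`
for `0 < d ≤ 1/(2h)`. Hence `|φ(t)|ⁿ ≤ exp(-c t²)` on `(0, π/h]` with `c = 4nh²H_h(X)/π²`, and
for `t ≥ a = σ²/(4γ)` this is at most `exp(-c a t)`, whose integral is at most
`1/(ca) = π²γ/(h²σ²nH_h(X)) ≤ π^{5/2}γ/(h²σ²nH_h(X))`.
-/

open MeasureTheory ProbabilityTheory

noncomputable def distNearestInt (α : ℝ) : ℝ := |α - round α|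

/-- `H(X,d) = E⟨X* d⟩²` where `X* = X - X'` is the symmetrisation of `X`; expressed via
the law `ν` of `X` as a double integral. -/
noncomputable def Hsym (ν : Measure ℝ) (d : ℝ) : ℝ :=
  ∫ x, ∫ y, distNearestInt ((x - y) * d) ^ 2 ∂ν ∂ν

/-- `H_D(X) = inf_{1/(4D) ≤ d ≤ 1/(2D)} H(X,d)`. -/
noncomputable def HsymD (ν : Measure ℝ) (D : ℕ) : ℝ :=
  sInf (Hsym ν '' Set.Icc (1 / (4 * (D : ℝ))) (1 / (2 * (D : ℝ))))

open Real

lemma distNearestInt_eq_norm (u : ℝ) : distNearestInt u = ‖(u : UnitAddCircle)‖ :=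
  UnitAddCircle.norm_eq.symm

lemma distNearestInt_nonneg (u : ℝ) : 0 ≤ distNearestInt u := abs_nonneg _

lemma sq_distNearestInt_le (u : ℝ) : distNearestInt u ^ 2 ≤ 1 / 4 := by
  have := abs_sub_round u
  rw [distNearestInt, ← sq_abs, abs_abs]
  nlinarith [abs_nonneg (u - round u)]

@[fun_prop]
lemma continuous_distNearestInt : Continuous distNearestInt := by
  rw [funext distNearestInt_eq_norm]
  exact continuous_norm.comp (AddCircle.continuous_mk' 1)

lemma distNearestInt_natCast_mul_le (m : ℕ) (u : ℝ) :
    distNearestInt (m * u) ≤ m * distNearestInt u := by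
  simpa only [distNearestInt_eq_norm, ← nsmul_eq_mul, AddCircle.coe_nsmul]
    using norm_nsmul_le (n := m) (a := (u : UnitAddCircle))

lemma cos_two_pi_mul_le_one_sub_distNearestInt_sq (u : ℝ) :
    cos (2 * π * u) ≤ 1 - 8 * distNearestInt u ^ 2 := by
  have hperiod : cos (2 * π * u) = cos (2 * π * (u - round u)) := by
    rw [mul_sub, ← cos_sub_int_mul_two_pi _ (round u)]
    ring_nf
  have hsmall : |2 * π * (u - round u)| ≤ π := by
    rw [abs_mul, abs_of_pos (by positivity)]
    nlinarith [abs_sub_round u, pi_pos]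
  rw [hperiod, distNearestInt]
  refine (cos_le_one_sub_mul_cos_sq hsmall).trans_eq ?_
  rw [sq_abs]
  field_simp
  ring

section

variable (ν : Measure ℝ)

lemma integrable_sq_distNearestInt_sub_mul [IsFiniteMeasure ν] (d : ℝ) :
    Integrable (fun p : ℝ × ℝ => distNearestInt ((p.1 - p.2) * d) ^ 2) (ν.prod ν) :=
  .of_bound (by fun_prop) (1 / 4) <| ae_of_all _ fun p => by
    simpa [sq_abs] using sq_distNearestInt_le ((p.1 - p.2) * d)

lemma Hsym_eq_integral_prod [IsFiniteMeasure ν] (d : ℝ) :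
    Hsym ν d = ∫ p, distNearestInt ((p.1 - p.2) * d) ^ 2 ∂(ν.prod ν) :=
  (integral_prod _ (integrable_sq_distNearestInt_sub_mul ν d)).symm

lemma Hsym_nonneg (d : ℝ) : 0 ≤ Hsym ν d :=
  integral_nonneg fun _ => integral_nonneg fun _ => sq_nonneg _

lemma Hsym_two_pow_mul_le [IsFiniteMeasure ν] (k : ℕ) (d : ℝ) :
    Hsym ν (2 ^ k * d) ≤ 4 ^ k * Hsym ν d := by
  rw [Hsym_eq_integral_prod, Hsym_eq_integral_prod, ← integral_const_mul]
  refine integral_mono (integrable_sq_distNearestInt_sub_mul ν _)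
    ((integrable_sq_distNearestInt_sub_mul ν d).const_mul _) fun p => ?_
  have hscaled := distNearestInt_natCast_mul_le (2 ^ k) ((p.1 - p.2) * d)
  push_cast at hscaled
  calc distNearestInt ((p.1 - p.2) * (2 ^ k * d)) ^ 2
      = distNearestInt (2 ^ k * ((p.1 - p.2) * d)) ^ 2 := by ring_nf
    _ ≤ (2 ^ k * distNearestInt ((p.1 - p.2) * d)) ^ 2 :=
      pow_le_pow_left₀ (distNearestInt_nonneg _) hscaled 2
    _ = 4 ^ k * distNearestInt ((p.1 - p.2) * d) ^ 2 := by
      rw [mul_pow, ← pow_mul, pow_mul']; norm_num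

lemma HsymD_le_Hsym (D : ℕ) {d : ℝ} (hd : d ∈ Set.Icc (1 / (4 * (D : ℝ))) (1 / (2 * (D : ℝ)))) :
    HsymD ν D ≤ Hsym ν d :=
  csInf_le ⟨0, Set.forall_mem_image.2 fun e _ => Hsym_nonneg ν e⟩ (Set.mem_image_of_mem _ hd)

lemma exists_two_pow_mul_mem_Icc {D d : ℝ} (hD : 0 < D) (hd : 0 < d) (hdD : d ≤ 1 / (2 * D)) :
    ∃ k : ℕ, 2 ^ k * d ∈ Set.Icc (1 / (4 * D)) (1 / (2 * D)) := by
  have hx : 1 ≤ 1 / (2 * D * d) := by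
    rw [le_div_iff₀ (by positivity), one_mul]
    rwa [le_div_iff₀ (by positivity), mul_comm] at hdD
  obtain ⟨k, hk, hk'⟩ := exists_nat_pow_near hx one_lt_two
  refine ⟨k, ?_, ?_⟩
  · rw [div_lt_iff₀ (by positivity), pow_succ] at hk'
    rw [div_le_iff₀ (by positivity)]
    linarith
  · rw [le_div_iff₀ (by positivity)] at hk ⊢
    linarith

lemma mul_HsymD_le_Hsym [IsFiniteMeasure ν] {D : ℕ} (hD : 0 < D) {d : ℝ} (hd : 0 < d)
    (hdD : d ≤ 1 / (2 * D)) : 4 * D ^ 2 * d ^ 2 * HsymD ν D ≤ Hsym ν d := by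
  obtain ⟨k, hk⟩ := exists_two_pow_mul_mem_Icc (Nat.cast_pos.2 hD) hd hdD
  have hscale : 4 ^ k * (4 * D ^ 2 * d ^ 2) ≤ (1 : ℝ) := by
    have h := hk.2
    rw [le_div_iff₀ (by positivity)] at h
    calc 4 ^ k * (4 * D ^ 2 * d ^ 2) = (2 ^ k * d * (2 * D)) ^ 2 := by
          rw [mul_pow, mul_pow, ← pow_mul, pow_mul']; ring
      _ ≤ 1 := pow_le_one₀ (by positivity) h
  calc 4 * D ^ 2 * d ^ 2 * HsymD ν D
      ≤ 4 * D ^ 2 * d ^ 2 * (4 ^ k * Hsym ν d) := by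
        gcongr
        exact (HsymD_le_Hsym ν D hk).trans (Hsym_two_pow_mul_le ν k d)
    _ ≤ Hsym ν d := by nlinarith [Hsym_nonneg ν d]

lemma norm_charFun_sq_eq_integral_cos [IsFiniteMeasure ν] (t : ℝ) :
    ‖charFun ν t‖ ^ 2 = ∫ p, cos (t * (p.1 - p.2)) ∂(ν.prod ν) := by
  have hint : Integrable (fun p : ℝ × ℝ => Complex.exp (↑(t * (p.1 - p.2)) * Complex.I))
      (ν.prod ν) :=
    .of_bound (by fun_prop) 1 <| ae_of_all _ fun p => by rw [Complex.norm_exp_ofReal_mul_I]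
  have hprod : ((‖charFun ν t‖ ^ 2 : ℝ) : ℂ)
      = ∫ p, Complex.exp (↑(t * (p.1 - p.2)) * Complex.I) ∂(ν.prod ν) := by
    rw [Complex.ofReal_pow, ← Complex.mul_conj', ← charFun_neg, charFun_apply_real,
      charFun_apply_real, ← integral_prod_mul]
    congr with p
    rw [← Complex.exp_add]
    push_cast
    ring_nf
  have hre := integral_re hint
  simp only [RCLike.re_to_complex, Complex.exp_ofReal_mul_I_re] at hre
  rw [hre, ← hprod, Complex.ofReal_re]

lemma norm_charFun_sq_le_one_sub_Hsym [IsProbabilityMeasure ν] (t : ℝ) :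
    ‖charFun ν t‖ ^ 2 ≤ 1 - 8 * Hsym ν (t / (2 * π)) := by
  have hker := (integrable_sq_distNearestInt_sub_mul ν (t / (2 * π))).const_mul 8
  calc ‖charFun ν t‖ ^ 2 = ∫ p, cos (t * (p.1 - p.2)) ∂(ν.prod ν) :=
        norm_charFun_sq_eq_integral_cos ν t
    _ ≤ ∫ p, (1 - 8 * distNearestInt ((p.1 - p.2) * (t / (2 * π))) ^ 2) ∂(ν.prod ν) := by
        refine integral_mono (.of_bound (by fun_prop) 1 (ae_of_all _ fun _ => abs_cos_le_one _))
          ((integrable_const _).sub hker) fun p => ?_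
        have harg : t * (p.1 - p.2) = 2 * π * ((p.1 - p.2) * (t / (2 * π))) := by
          field_simp
        simpa only [harg] using cos_two_pi_mul_le_one_sub_distNearestInt_sq _
    _ = 1 - 8 * Hsym ν (t / (2 * π)) := by
        rw [integral_sub (integrable_const _) hker, integral_const_mul, Hsym_eq_integral_prod]
        simp

lemma norm_charFun_le_exp_neg_mul_sq [IsProbabilityMeasure ν] {D : ℕ} (hD : 0 < D) {t : ℝ}
    (ht : 0 < t) (htD : t ≤ π / D) :
    ‖charFun ν t‖ ≤ exp (-(4 * D ^ 2 * HsymD ν D / π ^ 2 * t ^ 2)) := by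
  have hDR : (0 : ℝ) < D := Nat.cast_pos.2 hD
  have hdD : t / (2 * π) ≤ 1 / (2 * D) := by
    rw [div_le_div_iff₀ (by positivity) (by positivity)]
    rw [le_div_iff₀ hDR] at htD
    linarith
  have hH := mul_HsymD_le_Hsym ν hD (by positivity) hdD
  set c := 4 * D ^ 2 * HsymD ν D / π ^ 2 with hc_def
  have hc : 2 * (c * t ^ 2) = 8 * (4 * D ^ 2 * (t / (2 * π)) ^ 2 * HsymD ν D) := by
    rw [hc_def]
    field_simp
    ring
  have hsq : ‖charFun ν t‖ ^ 2 ≤ exp (-(c * t ^ 2)) ^ 2 :=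
    calc ‖charFun ν t‖ ^ 2 ≤ 1 - 8 * Hsym ν (t / (2 * π)) := norm_charFun_sq_le_one_sub_Hsym ν t
      _ ≤ 1 - 2 * (c * t ^ 2) := by linarith
      _ ≤ exp (-(2 * (c * t ^ 2))) := one_sub_le_exp_neg _
      _ = exp (-(c * t ^ 2)) ^ 2 := by rw [← exp_nat_mul]; ring_nf
  exact (pow_le_pow_iff_left₀ (norm_nonneg _) (exp_nonneg _) two_ne_zero).1 hsq

end

lemma integral_exp_neg_mul_le_inv {l a b : ℝ} (hl : 0 < l) (ha : 0 ≤ a) :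
    ∫ t in a..b, exp (-(l * t)) ≤ l⁻¹ := by
  have hint : ∫ t in a..b, exp (-(l * t)) = (exp (-(l * a)) - exp (-(l * b))) / l := by
    simp_rw [← neg_mul]
    rw [intervalIntegral.integral_comp_mul_left (fun t => exp t) (neg_ne_zero.2 hl.ne'),
      integral_exp, smul_eq_mul]
    field_simp
    ring
  rw [hint, inv_eq_one_div]
  gcongr
  linarith [exp_le_one_iff.2 (neg_nonpos.2 (mul_nonneg hl.le ha)), exp_pos (-(l * b))]

lemma integral_le_inv_of_le_exp_neg_mul_sq {f : ℝ → ℝ} {a b c : ℝ} (hc : 0 < c)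
    (ha : 0 < a) (hf : IntervalIntegrable f volume a b) (hf0 : ∀ t, 0 ≤ f t)
    (hfle : ∀ t ∈ Set.Icc a b, f t ≤ exp (-(c * t ^ 2))) :
    ∫ t in a..b, f t ≤ (c * a)⁻¹ := by
  rcases le_or_gt a b with hab | hba
  · calc ∫ t in a..b, f t ≤ ∫ t in a..b, exp (-(c * a * t)) := by
          refine intervalIntegral.integral_mono_on hab hf
            ((by fun_prop : Continuous _).intervalIntegrable _ _) fun t ht => ?_
          refine (hfle t ht).trans (exp_le_exp.2 ?_)
          have : a * t ≤ t ^ 2 := by nlinarith [ht.1]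
          nlinarith
      _ ≤ (c * a)⁻¹ := integral_exp_neg_mul_le_inv (by positivity) ha.le
  · rw [intervalIntegral.integral_symm]
    have := intervalIntegral.integral_nonneg (μ := volume) hba.le fun t _ => hf0 t
    have : 0 < (c * a)⁻¹ := by positivity
    linarith

theorem char_fun_integral_bound_general
    {Ω : Type*} [MeasurableSpace Ω] {μ : Measure Ω} [IsProbabilityMeasure μ]
    (X : Ω → ℝ) (hX : Measurable X)
    (h : ℕ) (hh : 0 < h)
    (σ γ : ℝ) (hσpos : 0 < σ) (hγpos : 0 < γ)
    (hH : 0 < HsymD (μ.map X) h)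
    (n : ℕ) (hn : 0 < n) :
    (∫ t in (σ ^ 2 / (4 * γ))..(Real.pi / h),
        ‖∫ ω, Complex.exp (Complex.I * (t * X ω)) ∂μ‖ ^ n) ≤
      Real.pi ^ ((5 : ℝ) / 2) * γ / (h ^ 2 * σ ^ 2 * n * HsymD (μ.map X) h) := by
  have : IsProbabilityMeasure (μ.map X) := Measure.isProbabilityMeasure_map hX.aemeasurable
  have hcharFun (t : ℝ) : ∫ ω, Complex.exp (Complex.I * (t * X ω)) ∂μ = charFun (μ.map X) t := by
    rw [charFun_apply_real, integral_map hX.aemeasurable (by fun_prop)]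
    simp only [mul_comm Complex.I]
  simp only [hcharFun]
  set H := HsymD (μ.map X) h
  have hpi : π ^ 2 ≤ π ^ ((5 : ℝ) / 2) := by
    rw [← rpow_natCast]
    exact rpow_le_rpow_of_exponent_le (by linarith [pi_gt_three]) (by norm_num)
  calc (∫ t in (σ ^ 2 / (4 * γ))..(π / h), ‖charFun (μ.map X) t‖ ^ n)
      ≤ (n * (4 * h ^ 2 * H / π ^ 2) * (σ ^ 2 / (4 * γ)))⁻¹ := by
        refine integral_le_inv_of_le_exp_neg_mul_sq (by positivity) (by positivity)
          ((continuous_charFun.norm.pow n).intervalIntegrable _ _) (fun _ => by positivity)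
          fun t ht => ?_
        have hpos : 0 < t := lt_of_lt_of_le (by positivity) ht.1
        calc ‖charFun (μ.map X) t‖ ^ n ≤ exp (-(4 * h ^ 2 * H / π ^ 2 * t ^ 2)) ^ n :=
              pow_le_pow_left₀ (norm_nonneg _)
                (norm_charFun_le_exp_neg_mul_sq (μ.map X) hh hpos ht.2) n
          _ = exp (-(n * (4 * h ^ 2 * H / π ^ 2) * t ^ 2)) := by
              rw [← exp_nat_mul]
              ring_nf
    _ = π ^ 2 * γ / (h ^ 2 * σ ^ 2 * n * H) := by
        field_simp
    _ ≤ π ^ ((5 : ℝ) / 2) * γ / (h ^ 2 * σ ^ 2 * n * H) := by gcongr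

/-- For a lattice random variable `X` of step `h` with variance `σ² > 0`, third absolute
moment `γ > 0` and `H_h(X) > 0`, the characteristic function `φ` satisfies
`∫_{σ²/(4γ)}^{π/h} |φ(t)|ⁿ dt ≤ π^{5/2} γ / (h² σ² n H_h(X))` for all `n ≥ 1`. -/
theorem char_fun_integral_bound
    {Ω : Type*} [MeasurableSpace Ω] {μ : Measure Ω} [IsProbabilityMeasure μ]
    (X : Ω → ℝ) (hX : Measurable X)
    (h : ℕ) (hh : 0 < h) (b : ℤ)
    (hlattice : ∀ᵐ ω ∂μ, ∃ k : ℤ, X ω = (b : ℝ) + (h : ℝ) * k)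
    (σ γ : ℝ) (hσpos : 0 < σ) (hσ : σ ^ 2 = variance X μ)
    (hγint : Integrable (fun ω => |X ω| ^ 3) μ)
    (hγ : γ = ∫ ω, |X ω| ^ 3 ∂μ) (hγpos : 0 < γ)
    (hH : 0 < HsymD (μ.map X) h)
    (n : ℕ) (hn : 0 < n) :
    (∫ t in (σ ^ 2 / (4 * γ))..(Real.pi / h),
        ‖∫ ω, Complex.exp (Complex.I * (t * X ω)) ∂μ‖ ^ n) ≤
      Real.pi ^ ((5 : ℝ) / 2) * γ / (h ^ 2 * σ ^ 2 * n * HsymD (μ.map X) h) :=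
  char_fun_integral_bound_general X hX h hh σ γ hσpos hγpos hH n hn
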